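/- For any Kripke model M, world w, bundle term τ, and formula φ of the unimodal language L_○, M,w ⊨_τ ○φ if and only if |φ|_M^τ ∩ Dom_M(w,τ) ∈ Nbh^com_M(w,τ), where Nbh^com_M(w,τ) is the completion of the generated neighborhood. -/
import Mathlib


/-- Bundle terms over index set `A` with arity function `ρ`. -/
inductive BTerm (A : Type) (ρ : A → ℕ) : Type where
  | pos : BTerm A ρ
  | neg : BTerm A ρ
  | nabla (a : A) (ts : Fin (ρ a) → BTerm A ρ) : BTerm A ρ
  | delta (a : A) (ts : Fin (ρ a) → BTerm A ρ) : BTerm A ρ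

variable {A : Type} {ρ : A → ℕ} {W : Type}

/-- Term satisfaction `M,w,Z ⊨ τ` in the Kripke model given by relations `R`. -/
def TSat (R : ∀ a : A, W → Set (Fin (ρ a) → W)) (w : W) (Z : Set W) : BTerm A ρ → Prop
  | .pos => w ∈ Z
  | .neg => w ∉ Z
  | .nabla a ts => ∀ v ∈ R a w, ∃ i : Fin (ρ a), TSat R (v i) Z (ts i)
  | .delta a ts => ∃ v ∈ R a w, ∀ i : Fin (ρ a), TSat R (v i) Z (ts i)

/-- The generated neighborhood `Nbh_M(w, τ)`. -/
def Nbh (R : ∀ a : A, W → Set (Fin (ρ a) → W)) : W → BTerm A ρ → Set (Set W × Set W)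
  | w, .pos => {({w}, ∅)}
  | w, .neg => {(∅, {w})}
  | w, .nabla a ts =>
      { p | ∃ f : {v // v ∈ R a w} → Set W × Set W,
          (∀ v : {v // v ∈ R a w}, ∃ i : Fin (ρ a), f v ∈ Nbh R (v.1 i) (ts i)) ∧
          p = (⋃ v, (f v).1, ⋃ v, (f v).2) }
  | w, .delta a ts =>
      { p | ∃ v ∈ R a w, ∃ g : Fin (ρ a) → Set W × Set W,
          (∀ i : Fin (ρ a), g i ∈ Nbh R (v i) (ts i)) ∧
          p = (⋃ i, (g i).1, ⋃ i, (g i).2) }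

/-- The domain `Dom_M(w, τ)`. -/
def Dom (R : ∀ a : A, W → Set (Fin (ρ a) → W)) : W → BTerm A ρ → Set W
  | w, .pos => {w}
  | w, .neg => {w}
  | w, .nabla a ts => ⋃ v ∈ R a w, ⋃ i : Fin (ρ a), Dom R (v i) (ts i)
  | w, .delta a ts => ⋃ v ∈ R a w, ⋃ i : Fin (ρ a), Dom R (v i) (ts i)

/-- The completion `Nbh^com_M(w, τ)`. -/
def NbhCom (R : ∀ a : A, W → Set (Fin (ρ a) → W)) (w : W) (τ : BTerm A ρ) : Set (Set W) :=
  { Z | Z ⊆ Dom R w τ ∧ ∃ p ∈ Nbh R w τ, p.1 ⊆ Z ∧ p.2 ⊆ Dom R w τ \ Z }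
/-- Formulas of the unimodal language `L_○`. -/
inductive Form (P : Type) : Type where
  | atom : P → Form P
  | top : Form P
  | not : Form P → Form P
  | and : Form P → Form P → Form P
  | circ : Form P → Form P

namespace Form
variable {P : Type}
/-- `φ ∨ ψ`. -/
def or (φ ψ : Form P) : Form P := .not (.and (.not φ) (.not ψ))
/-- `φ → ψ`. -/
def imp (φ ψ : Form P) : Form P := .not (.and φ (.not ψ))
/-- `φ ↔ ψ`. -/
def iff (φ ψ : Form P) : Form P := .and (imp φ ψ) (imp ψ φ)
/-- `●φ := ○¬φ`. -/
def bcirc (φ : Form P) : Form P := .circ (.not φ)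
end Form

variable {A : Type} {ρ : A → ℕ} {W P : Type}

/-- τ-bundled semantics `M,w ⊨_τ φ`. -/
def BSat (R : ∀ a : A, W → Set (Fin (ρ a) → W)) (V : P → Set W) (τ : BTerm A ρ) :
    W → Form P → Prop
  | w, .atom p => w ∈ V p
  | _, .top => True
  | w, .not φ => ¬ BSat R V τ w φ
  | w, .and φ ψ => BSat R V τ w φ ∧ BSat R V τ w ψ
  | w, .circ φ => TSat R w { v | BSat R V τ v φ } τ
lemma nbh_subset_dom (R : ∀ a : A, W → Set (Fin (ρ a) → W)) (w : W) (τ : BTerm A ρ)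
    (p : Set W × Set W) (hp : p ∈ Nbh R w τ) :
    p.1 ⊆ Dom R w τ ∧ p.2 ⊆ Dom R w τ := by
  induction τ generalizing w p with
  | pos =>
    simp only [Nbh, Set.mem_singleton_iff] at hp
    subst hp; simp [Dom]
  | neg =>
    simp only [Nbh, Set.mem_singleton_iff] at hp
    subst hp; simp [Dom]
  | nabla a ts ih =>
    obtain ⟨f, hf, rfl⟩ := hp
    constructor
    · rintro x hx
      simp only [Set.mem_iUnion] at hx
      obtain ⟨v, hv⟩ := hx
      obtain ⟨i, hi⟩ := hf v
      refine Set.mem_biUnion v.2 ?_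
      exact Set.mem_iUnion.2 ⟨i, (ih i _ _ hi).1 hv⟩
    · rintro x hx
      simp only [Set.mem_iUnion] at hx
      obtain ⟨v, hv⟩ := hx
      obtain ⟨i, hi⟩ := hf v
      refine Set.mem_biUnion v.2 ?_
      exact Set.mem_iUnion.2 ⟨i, (ih i _ _ hi).2 hv⟩
  | delta a ts ih =>
    obtain ⟨v, hvR, g, hg, rfl⟩ := hp
    constructor
    · rintro x hx
      simp only [Set.mem_iUnion] at hx
      obtain ⟨i, hi⟩ := hx
      refine Set.mem_biUnion hvR ?_
      exact Set.mem_iUnion.2 ⟨i, (ih i _ _ (hg i)).1 hi⟩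
    · rintro x hx
      simp only [Set.mem_iUnion] at hx
      obtain ⟨i, hi⟩ := hx
      refine Set.mem_biUnion hvR ?_
      exact Set.mem_iUnion.2 ⟨i, (ih i _ _ (hg i)).2 hi⟩

lemma tsat_iff_nbh (R : ∀ a : A, W → Set (Fin (ρ a) → W)) (w : W) (Z : Set W)
    (τ : BTerm A ρ) :
    TSat R w Z τ ↔ ∃ p ∈ Nbh R w τ, p.1 ⊆ Z ∧ p.2 ⊆ Zᶜ := by
  induction τ generalizing w with
  | pos =>
    simp only [TSat, Nbh]
    constructor
    · intro h; exact ⟨({w}, ∅), rfl, by simpa, by simp⟩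
    · rintro ⟨p, rfl, h1, h2⟩
      exact h1 rfl
  | neg =>
    simp only [TSat, Nbh]
    constructor
    · intro h; exact ⟨(∅, {w}), rfl, by simp, by simpa⟩
    · rintro ⟨p, rfl, h1, h2⟩
      exact h2 rfl
  | nabla a ts ih =>
    constructor
    · intro h
      have : ∀ v : {v // v ∈ R a w}, ∃ p : Set W × Set W, ∃ i : Fin (ρ a),
          p ∈ Nbh R (v.1 i) (ts i) ∧ p.1 ⊆ Z ∧ p.2 ⊆ Zᶜ := by
        rintro ⟨v, hv⟩
        obtain ⟨i, hi⟩ := h v hv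
        obtain ⟨p, hp, h1, h2⟩ := (ih i (v i)).1 hi
        exact ⟨p, i, hp, h1, h2⟩
      choose f i hf h1 h2 using this
      refine ⟨(⋃ v, (f v).1, ⋃ v, (f v).2), ⟨f, fun v => ⟨i v, hf v⟩, rfl⟩, ?_, ?_⟩
      · exact Set.iUnion_subset h1
      · exact Set.iUnion_subset h2
    · rintro ⟨p, ⟨f, hf, rfl⟩, h1, h2⟩ v hv
      obtain ⟨i, hi⟩ := hf ⟨v, hv⟩
      refine ⟨i, (ih i (v i)).2 ⟨f ⟨v, hv⟩, hi, ?_, ?_⟩⟩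
      · exact (Set.subset_iUnion (fun u : {v // v ∈ R a w} => (f u).1) ⟨v, hv⟩).trans h1
      · exact (Set.subset_iUnion (fun u : {v // v ∈ R a w} => (f u).2) ⟨v, hv⟩).trans h2
  | delta a ts ih =>
    constructor
    · rintro ⟨v, hv, h⟩
      have : ∀ i : Fin (ρ a), ∃ p : Set W × Set W,
          p ∈ Nbh R (v i) (ts i) ∧ p.1 ⊆ Z ∧ p.2 ⊆ Zᶜ := fun i => (ih i (v i)).1 (h i)
      choose g hg h1 h2 using this
      exact ⟨(⋃ i, (g i).1, ⋃ i, (g i).2), ⟨v, hv, g, hg, rfl⟩,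
        Set.iUnion_subset h1, Set.iUnion_subset h2⟩
    · rintro ⟨p, ⟨v, hv, g, hg, rfl⟩, h1, h2⟩
      refine ⟨v, hv, fun i => (ih i (v i)).2 ⟨g i, hg i, ?_, ?_⟩⟩
      · exact (Set.subset_iUnion (fun i => (g i).1) i).trans h1
      · exact (Set.subset_iUnion (fun i => (g i).2) i).trans h2

lemma tsat_iff_completion (R : ∀ a : A, W → Set (Fin (ρ a) → W)) (w : W) (Z : Set W)
    (τ : BTerm A ρ) :
    TSat R w Z τ ↔ Z ∩ Dom R w τ ∈ NbhCom R w τ := by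
  rw [tsat_iff_nbh]
  constructor
  · rintro ⟨p, hp, h1, h2⟩
    obtain ⟨hd1, hd2⟩ := nbh_subset_dom R w τ p hp
    refine ⟨Set.inter_subset_right, p, hp, fun x hx => ⟨h1 hx, hd1 hx⟩,
      fun x hx => ⟨hd2 hx, fun hxz => h2 hx hxz.1⟩⟩
  · rintro ⟨_, p, hp, h1, h2⟩
    exact ⟨p, hp, fun x hx => (h1 hx).1, fun x hx hxz =>
      (h2 hx).2 ⟨hxz, (nbh_subset_dom R w τ p hp).2 hx⟩⟩

/-- `M,w ⊨_τ ○φ` iff the truth set of `φ` intersected with the domain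
belongs to the completion of the generated neighborhood. -/
theorem circ_iff_completion (R : ∀ a : A, W → Set (Fin (ρ a) → W)) (V : P → Set W)
    (τ : BTerm A ρ) (w : W) (φ : Form P) :
    BSat R V τ w (.circ φ) ↔
      { v | BSat R V τ v φ } ∩ Dom R w τ ∈ NbhCom R w τ := by
  exact tsat_iff_completion R w _ τ
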